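/- arXiv:0808.0202 — 4 statements merged into one kernel-verified Lean document; each statement's English description precedes it below -/
import Mathlib

section
/- For every integer k ≥ 2, every k-tree process realization (G_n)_{n ≥ k+1}, every n ≥ k+1 and every vertex v of G_n, the number of k-cliques of G_n that contain v equals k + (k − 1)·(deg_{G_n}(v) − k), where deg_{G_n}(v) denotes the degree of v in G_n. -/
open Finset

def IsKTreeRealization (k : ℕ) (G : ℕ → SimpleGraph ℕ) : Prop :=
  (∀ u v, (G (k + 1)).Adj u v ↔ u ≠ v ∧ u < k + 1 ∧ v < k + 1) ∧
  ∀ n, k + 1 ≤ n → ∃ C : Finset ℕ, (G n).IsNClique k C ∧ (∀ u ∈ C, u < n) ∧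
    ∀ u v, (G (n + 1)).Adj u v ↔ (G n).Adj u v ∨ (u = n ∧ v ∈ C) ∨ (v = n ∧ u ∈ C)

lemma helper_card (v : ℕ) (t : Finset ℕ) (hv : v ∈ t) (m : ℕ) :
    ((t.powersetCard (m+1)).filter (fun s => v ∈ s)).card
      = ((t.erase v).powersetCard m).card := by
  apply Finset.card_bij (fun s _ => s.erase v)
  · intro s hs
    simp only [mem_filter, mem_powersetCard] at hs
    simp only [mem_powersetCard]
    refine ⟨erase_subset_erase v hs.1.1, ?_⟩
    rw [card_erase_of_mem hs.2, hs.1.2]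
    omega
  · intro s1 h1 s2 h2 heq
    simp only [mem_filter, mem_powersetCard] at h1 h2
    rw [← insert_erase h1.2, heq, insert_erase h2.2]
  · intro T hT
    simp only [mem_powersetCard] at hT
    have hvT : v ∉ T := fun h => (mem_erase.mp (hT.1 h)).1 rfl
    refine ⟨insert v T, ?_, ?_⟩
    · simp only [mem_filter, mem_powersetCard]
      refine ⟨⟨?_, ?_⟩, mem_insert_self v T⟩
      · intro u hu
        rcases mem_insert.mp hu with rfl | hu
        · exact hv
        · exact (erase_subset v t) (hT.1 hu)
      · rw [card_insert_of_notMem hvT, hT.2]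
    · rw [erase_insert hvT]

lemma helper_card' (v : ℕ) (t : Finset ℕ) (hv : v ∈ t) (m : ℕ) (hm : m ≠ 0) :
    ((t.powersetCard m).filter (fun s => v ∈ s)).card
      = ((t.erase v).powersetCard (m-1)).card := by
  obtain ⟨m', rfl⟩ : ∃ m', m = m'+1 := ⟨m-1, by omega⟩
  simpa using helper_card v t hv m'

lemma clique_mem_lt {k n : ℕ} (hk : 2 ≤ k) {G : SimpleGraph ℕ}
    (hb : ∀ u v, G.Adj u v → u < n ∧ v < n) {S : Finset ℕ} (hS : G.IsNClique k S) :
    ∀ u ∈ S, u < n := by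
  intro u hu
  obtain ⟨w, hw, hwu⟩ := Finset.exists_mem_ne (by rw [hS.2]; omega) u
  exact (hb w u (hS.1 (Finset.mem_coe.mpr hw) (Finset.mem_coe.mpr hu) hwu)).2

lemma ktree_main (k : ℕ) (hk : 2 ≤ k) (G : ℕ → SimpleGraph ℕ)
    (hG : IsKTreeRealization k G) :
    ∀ n, k + 1 ≤ n →
      (∀ u v, (G n).Adj u v → u < n ∧ v < n) ∧
      (∀ v, v < n → k ≤ ((G n).neighborSet v).ncard ∧
        {C : Finset ℕ | (G n).IsNClique k C ∧ v ∈ C}.ncard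
          = k + (k - 1) * (((G n).neighborSet v).ncard - k)) := by
  obtain ⟨j, hkj⟩ : ∃ j, k = j + 2 := ⟨k - 2, by omega⟩
  have hch1 : k.choose (k-1) = k := by
    rw [hkj]; exact Nat.choose_succ_self_right (j+1)
  have hch2 : (k-1).choose (k-1-1) = k-1 := by
    rw [hkj]; exact Nat.choose_succ_self_right j
  intro n hn
  induction n, hn using Nat.le_induction with
  | base =>
    have hbd : ∀ u v, (G (k+1)).Adj u v → u < k+1 ∧ v < k+1 := by
      intro u v h
      rw [hG.1] at h
      exact ⟨h.2.1, h.2.2⟩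
    refine ⟨hbd, ?_⟩
    intro v hv
    have hvmem : v ∈ range (k+1) := by rw [mem_range]; omega
    have hN : (G (k+1)).neighborSet v = ↑((range (k+1)).erase v) := by
      ext u
      simp only [SimpleGraph.mem_neighborSet, hG.1 v u, Finset.coe_erase,
        Set.mem_diff, Finset.mem_coe, Finset.mem_range, Set.mem_singleton_iff]
      constructor
      · rintro ⟨h1, h2, h3⟩; exact ⟨h3, fun h => h1 h.symm⟩
      · rintro ⟨h1, h2⟩; exact ⟨fun h => h2 h.symm, hv, h1⟩
    have hNcard : ((G (k+1)).neighborSet v).ncard = k := by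
      rw [hN, Set.ncard_coe_finset, card_erase_of_mem hvmem, card_range]
      omega
    have hcl : ∀ S : Finset ℕ, (G (k+1)).IsNClique k S ↔ S ⊆ range (k+1) ∧ S.card = k := by
      intro S
      constructor
      · intro hS
        refine ⟨?_, hS.2⟩
        intro u hu
        rw [mem_range]
        exact clique_mem_lt hk hbd hS u hu
      · rintro ⟨hsub, hcard⟩
        refine ⟨?_, hcard⟩
        intro a ha b hb hab
        rw [hG.1]
        exact ⟨hab, mem_range.mp (hsub ha), mem_range.mp (hsub hb)⟩
    have hAset : {S : Finset ℕ | (G (k+1)).IsNClique k S ∧ v ∈ S}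
        = ↑(((range (k+1)).powersetCard k).filter (fun s => v ∈ s)) := by
      ext S
      simp only [Set.mem_setOf_eq, hcl, Finset.mem_coe, mem_filter, mem_powersetCard]
    rw [hNcard, hAset, Set.ncard_coe_finset,
      helper_card' v (range (k+1)) hvmem k (by omega),
      card_powersetCard, card_erase_of_mem hvmem, card_range,
      show k+1-1 = k from by omega, hch1]
    simp [Nat.sub_self]
  | succ n hn ih =>
    obtain ⟨hbound, hmain⟩ := ih
    obtain ⟨C, hCclq, hCbd, hadj⟩ := hG.2 n hn
    have hCcard : C.card = k := hCclq.2
    have hnC : n ∉ C := fun h => lt_irrefl n (hCbd n h)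
    have hnoadj : ∀ u, ¬ (G n).Adj u n := fun u h => lt_irrefl n (hbound u n h).2
    have hnoadj' : ∀ u, ¬ (G n).Adj n u := fun u h => lt_irrefl n (hbound n u h).1
    have hbound' : ∀ u v, (G (n+1)).Adj u v → u < n+1 ∧ v < n+1 := by
      intro u v h
      rw [hadj] at h
      rcases h with h | ⟨rfl, hv⟩ | ⟨rfl, hu⟩
      · have := hbound u v h; omega
      · have := hCbd v hv; omega
      · have := hCbd u hu; omega
    have hnoclq : ∀ S : Finset ℕ, (G n).IsNClique k S → n ∉ S := by
      intro S hS h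
      exact lt_irrefl n (clique_mem_lt hk hbound hS n h)
    have hclq' : ∀ S : Finset ℕ, (G (n+1)).IsNClique k S ↔
        (G n).IsNClique k S ∨ (n ∈ S ∧ S.erase n ⊆ C ∧ S.card = k) := by
      intro S
      constructor
      · intro hS
        by_cases hnS : n ∈ S
        · right
          refine ⟨hnS, ?_, hS.2⟩
          intro u hu
          rw [mem_erase] at hu
          have := hS.1 (Finset.mem_coe.mpr hu.2) (Finset.mem_coe.mpr hnS) hu.1
          rw [hadj] at this
          rcases this with h | ⟨h1, _⟩ | ⟨_, h2⟩
          · exact absurd h (hnoadj u)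
          · exact absurd h1 hu.1
          · exact h2
        · left
          refine ⟨?_, hS.2⟩
          intro u hu w hw huw
          have := hS.1 hu hw huw
          rw [hadj] at this
          rcases this with h | ⟨h1, _⟩ | ⟨h1, _⟩
          · exact h
          · exact absurd (h1 ▸ hu) hnS
          · exact absurd (h1 ▸ hw) hnS
      · rintro (hS | ⟨hnS, hSC, hScard⟩)
        · refine ⟨?_, hS.2⟩
          intro u hu w hw huw
          rw [hadj]
          exact Or.inl (hS.1 hu hw huw)
        · refine ⟨?_, hScard⟩
          intro u hu w hw huw
          rw [hadj]
          by_cases hun : u = n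
          · subst hun
            exact Or.inr (Or.inl ⟨rfl, hSC (mem_erase.mpr ⟨fun h => huw h.symm, hw⟩)⟩)
          · by_cases hwn : w = n
            · subst hwn
              exact Or.inr (Or.inr ⟨rfl, hSC (mem_erase.mpr ⟨hun, hu⟩)⟩)
            · exact Or.inl (hCclq.1 (Finset.mem_coe.mpr (hSC (mem_erase.mpr ⟨hun, hu⟩)))
                (Finset.mem_coe.mpr (hSC (mem_erase.mpr ⟨hwn, hw⟩))) huw)
    have hAfin : ∀ v, {S : Finset ℕ | (G n).IsNClique k S ∧ v ∈ S}.Finite := by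
      intro v
      apply Set.Finite.subset (Finset.finite_toSet ((range n).powerset))
      intro S hS
      simp only [Set.mem_setOf_eq] at hS
      simp only [Finset.mem_coe, Finset.mem_powerset]
      intro u hu
      rw [mem_range]
      exact clique_mem_lt hk hbound hS.1 u hu
    have hNfin : ∀ v, ((G n).neighborSet v).Finite := fun v =>
      Set.Finite.subset (Set.finite_Iio n) (fun u hu => (hbound v u hu).2)
    have hinjins : Set.InjOn (insert n) {T : Finset ℕ | T ⊆ C} := by
      intro T1 h1 T2 h2 he
      have hn1 : n ∉ T1 := fun h => hnC (h1 h)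
      have hn2 : n ∉ T2 := fun h => hnC (h2 h)
      rw [← Finset.erase_insert hn1, he, Finset.erase_insert hn2]
    refine ⟨hbound', ?_⟩
    intro v hv
    by_cases hvn : n = v
    · subst hvn
      have hN : (G (n+1)).neighborSet n = ↑C := by
        ext u
        rw [SimpleGraph.mem_neighborSet, hadj n u]
        constructor
        · rintro (h | ⟨_, h⟩ | ⟨rfl, h⟩)
          · exact absurd h (hnoadj' u)
          · exact Finset.mem_coe.mpr h
          · exact absurd h hnC
        · intro h
          exact Or.inr (Or.inl ⟨rfl, Finset.mem_coe.mp h⟩)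
      have hNcard : ((G (n+1)).neighborSet n).ncard = k := by
        rw [hN, Set.ncard_coe_finset, hCcard]
      have hAset : {S : Finset ℕ | (G (n+1)).IsNClique k S ∧ n ∈ S}
          = ↑((C.powersetCard (k-1)).image (insert n)) := by
        ext S
        simp only [Set.mem_setOf_eq, hclq', Finset.coe_image, Set.mem_image,
          Finset.mem_coe, mem_powersetCard]
        constructor
        · rintro ⟨hS | ⟨hnS, hSC, hScard⟩, hnS'⟩
          · exact absurd hnS' (hnoclq S hS)
          · refine ⟨S.erase n, ⟨hSC, ?_⟩, insert_erase hnS⟩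
            rw [card_erase_of_mem hnS, hScard]
        · rintro ⟨T, ⟨hTC, hTcard⟩, rfl⟩
          have hnT : n ∉ T := fun h => hnC (hTC h)
          refine ⟨Or.inr ⟨mem_insert_self n T, ?_, ?_⟩, mem_insert_self n T⟩
          · rw [erase_insert hnT]; exact hTC
          · rw [card_insert_of_notMem hnT, hTcard]; omega
      refine ⟨by rw [hNcard], ?_⟩
      rw [hNcard, hAset, Set.ncard_coe_finset,
        Finset.card_image_of_injOn (fun T hT T' hT' he => hinjins
          (fun u hu => (mem_powersetCard.mp hT).1 hu)
          (fun u hu => (mem_powersetCard.mp hT').1 hu) he),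
        card_powersetCard, hCcard, hch1]
      simp [Nat.sub_self]
    · have hvn' : v < n := by omega
      have hvne : v ≠ n := fun h => hvn h.symm
      obtain ⟨hdeg, hcount⟩ := hmain v hvn'
      by_cases hvC : v ∈ C
      · have hN : (G (n+1)).neighborSet v = insert n ((G n).neighborSet v) := by
          ext u
          rw [SimpleGraph.mem_neighborSet, hadj v u]
          constructor
          · rintro (h | ⟨h, _⟩ | ⟨rfl, _⟩)
            · exact Or.inr h
            · exact absurd h hvne
            · exact Or.inl rfl
          · rintro (rfl | h)
            · exact Or.inr (Or.inr ⟨rfl, hvC⟩)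
            · exact Or.inl h
        have hnN : n ∉ (G n).neighborSet v := hnoadj v
        have hNcard : ((G (n+1)).neighborSet v).ncard = ((G n).neighborSet v).ncard + 1 := by
          rw [hN, Set.ncard_insert_of_notMem hnN (hNfin v)]
        have hAset : {S : Finset ℕ | (G (n+1)).IsNClique k S ∧ v ∈ S}
            = {S : Finset ℕ | (G n).IsNClique k S ∧ v ∈ S}
              ∪ ↑((((C.powersetCard (k-1)).filter (fun T => v ∈ T)).image (insert n))) := by
          ext S
          simp only [Set.mem_setOf_eq, hclq', Set.mem_union, Finset.coe_image,
            Set.mem_image, Finset.mem_coe, mem_filter, mem_powersetCard]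
          constructor
          · rintro ⟨hS | ⟨hnS, hSC, hScard⟩, hvS⟩
            · exact Or.inl ⟨hS, hvS⟩
            · refine Or.inr ⟨S.erase n, ⟨⟨hSC, ?_⟩, mem_erase.mpr ⟨hvne, hvS⟩⟩,
                insert_erase hnS⟩
              rw [card_erase_of_mem hnS, hScard]
          · rintro (⟨hS, hvS⟩ | ⟨T, ⟨⟨hTC, hTcard⟩, hvT⟩, rfl⟩)
            · exact ⟨Or.inl hS, hvS⟩
            · have hnT : n ∉ T := fun h => hnC (hTC h)
              refine ⟨Or.inr ⟨mem_insert_self n T, ?_, ?_⟩, mem_insert_of_mem hvT⟩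
              · rw [erase_insert hnT]; exact hTC
              · rw [card_insert_of_notMem hnT, hTcard]; omega
        have hdisj : Disjoint {S : Finset ℕ | (G n).IsNClique k S ∧ v ∈ S}
            (↑((((C.powersetCard (k-1)).filter (fun T => v ∈ T)).image (insert n))) :
              Set (Finset ℕ)) := by
          rw [Set.disjoint_left]
          rintro S ⟨hS, _⟩ hS2
          simp only [Finset.coe_image, Set.mem_image, Finset.mem_coe, mem_filter,
            mem_powersetCard] at hS2
          obtain ⟨T, _, rfl⟩ := hS2
          exact hnoclq _ hS (mem_insert_self n T)
        have himcard :
            ((((C.powersetCard (k-1)).filter (fun T => v ∈ T)).image (insert n))).card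
              = k - 1 := by
          rw [Finset.card_image_of_injOn (fun T hT T' hT' he => hinjins
            (fun u hu => (mem_powersetCard.mp (mem_filter.mp hT).1).1 hu)
            (fun u hu => (mem_powersetCard.mp (mem_filter.mp hT').1).1 hu) he),
            helper_card' v C hvC (k-1) (by omega),
            card_powersetCard, card_erase_of_mem hvC, hCcard, hch2]
        refine ⟨by rw [hNcard]; omega, ?_⟩
        rw [hNcard, hAset, Set.ncard_union_eq hdisj (hAfin v) (Finset.finite_toSet _),
          Set.ncard_coe_finset, himcard, hcount,
          show ((G n).neighborSet v).ncard + 1 - k = (((G n).neighborSet v).ncard - k) + 1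
            from by omega,
          Nat.mul_succ]
        generalize (k - 1) * (((G n).neighborSet v).ncard - k) = p
        omega
      · have hN : (G (n+1)).neighborSet v = (G n).neighborSet v := by
          ext u
          rw [SimpleGraph.mem_neighborSet, hadj v u]
          constructor
          · rintro (h | ⟨h, _⟩ | ⟨rfl, h⟩)
            · exact h
            · exact absurd h hvne
            · exact absurd h hvC
          · exact fun h => Or.inl h
        have hAset : {S : Finset ℕ | (G (n+1)).IsNClique k S ∧ v ∈ S}
            = {S : Finset ℕ | (G n).IsNClique k S ∧ v ∈ S} := by
          ext S
          simp only [Set.mem_setOf_eq, hclq']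
          constructor
          · rintro ⟨hS | ⟨hnS, hSC, _⟩, hvS⟩
            · exact ⟨hS, hvS⟩
            · exact absurd (hSC (mem_erase.mpr ⟨hvne, hvS⟩)) hvC
          · rintro ⟨hS, hvS⟩
            exact ⟨Or.inl hS, hvS⟩
        rw [hN, hAset]
        exact ⟨hdeg, hcount⟩

/-- For every integer `k ≥ 2`, every `k`-tree process realization `(G n)_{n ≥ k+1}`,
every `n ≥ k+1` and every vertex `v` of `G n`, the number of `k`-cliques of `G n`
containing `v` equals `k + (k − 1)·(deg_{G n}(v) − k)`. -/
theorem card_kcliques_through_vertex (k : ℕ) (hk : 2 ≤ k)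
    (G : ℕ → SimpleGraph ℕ) (hG : IsKTreeRealization k G) :
    ∀ n, k + 1 ≤ n → ∀ v, v < n →
      {C : Finset ℕ | (G n).IsNClique k C ∧ v ∈ C}.ncard
        = k + (k - 1) * (((G n).neighborSet v).ncard - k) := by
  intro n hn v hv
  exact ((ktree_main k hk G hG n hn).2 v hv).2
end

section
/- For every integer k ≥ 2, every k-tree process realization (G_n)_{n ≥ k+1}, every n ≥ k+1 and every vertex v of G_n with deg_{G_n}(v) = d, the proportion of k-cliques of G_n that contain v (i.e., the number of k-cliques containing v divided by the total number of k-cliques of G_n) equals ((k − 1)·d − k·(k − 2)) / (k·n − k² + 1). Consequently, in the random k-tree process, conditionally on G^k(n), the probability that the new vertex v_{n+1} is joined to a given vertex v of degree d is ((k − 1)·d − k·(k − 2)) / (k·n − k² + 1). -/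
open MeasureTheory

/-- The complete graph on the vertices `0, …, m-1` inside `ℕ`. -/
def completeBelow (m : ℕ) : SimpleGraph ℕ :=
  SimpleGraph.fromRel (fun u v => u < m ∧ v < m)

/-- The graph obtained from `g` by joining the new vertex `n` to all vertices of `C`. -/
def extendGraph (g : SimpleGraph ℕ) (n : ℕ) (C : Finset ℕ) : SimpleGraph ℕ :=
  SimpleGraph.fromRel (fun u v => g.Adj u v ∨ (u = n ∧ v ∈ C))

/-- The random `k`-tree process: `G (k+1)` is almost surely the complete graph on the
vertices `0, …, k`, and given `G n = g` (for `n ≥ k+1`), a `k`-clique of `g` is chosen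
uniformly at random among all `k`-cliques of `g` and the new vertex `n` is joined to all
of its `k` vertices. -/
structure IsRandomKTreeProcess (k : ℕ) {Ω : Type*} [MeasurableSpace Ω]
    (μ : Measure Ω) (G : ℕ → Ω → SimpleGraph ℕ) : Prop where
  meas : ∀ n (g : SimpleGraph ℕ), MeasurableSet {ω | G n ω = g}
  init : μ {ω | G (k + 1) ω = completeBelow (k + 1)} = 1
  step : ∀ n, k + 1 ≤ n → ∀ g : SimpleGraph ℕ, ∀ C : Finset ℕ, g.IsNClique k C →
    μ {ω | G n ω = g ∧ G (n + 1) ω = extendGraph g n C}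
      = μ {ω | G n ω = g} / ({D : Finset ℕ | g.IsNClique k D}.ncard : ENNReal)

/-!
A `k`-tree on `n` vertices grows from a `k`-clique by repeatedly attaching a new vertex `n` to a
`k`-clique `C`; the `k`-cliques this creates are exactly the `k` sets `insert n (C.erase u)`,
`u ∈ C`. So there are `k (n - k) + 1` of them, and a vertex `v` lies in
`(k - 1) deg v - k (k - 2)` of them: attaching `n` to `C ∋ v` raises the degree of `v` by one
and its clique count by `k - 1`, and the new vertex has degree `k` and lies in `k` cliques.

In the random process only finitely many graphs can occur at time `n`, and almost surely each
step attaches the new vertex to some `k`-clique, so `G n` is almost surely a `k`-tree. Given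
`G n = g`, the event that `n` is joined to `v` is then, up to a null set, the disjoint union over
the `k`-cliques `C ∋ v` of the events that `C` is chosen, each of probability `1 / #cliques`.
-/

theorem Finset.exists_eq_erase_of_subset_of_card_add_one {α : Type*} [DecidableEq α]
    {s t : Finset α} (hts : t ⊆ s) (h : t.card + 1 = s.card) : ∃ u ∈ s, t = s.erase u := by
  obtain ⟨u, hut, rfl⟩ := Finset.exists_eq_insert_iff.2 ⟨hts, h⟩
  exact ⟨u, Finset.mem_insert_self u t, (Finset.erase_insert hut).symm⟩

theorem Finset.card_filter_mem_insert_erase {α : Type*} [DecidableEq α] {n v : α} (hvn : v ≠ n)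
    (C : Finset α) :
    {u ∈ C | v ∈ insert n (C.erase u)}.card = if v ∈ C then C.card - 1 else 0 := by
  split_ifs with hvC
  · rw [← Finset.card_erase_of_mem hvC]
    congr 1
    ext u
    simp only [Finset.mem_filter, Finset.mem_insert, Finset.mem_erase, hvn, false_or]
    grind
  · rw [Finset.card_eq_zero, Finset.filter_eq_empty_iff]
    simp only [Finset.mem_insert, Finset.mem_erase, hvn, false_or]
    exact fun _ _ h => hvC h.2

theorem completeBelow_adj {m u v : ℕ} :
    (completeBelow m).Adj u v ↔ u ≠ v ∧ u < m ∧ v < m := by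
  simp only [completeBelow, SimpleGraph.fromRel_adj]
  tauto

theorem extendGraph_adj {g : SimpleGraph ℕ} {n : ℕ} {C : Finset ℕ} (hnC : n ∉ C) {u v : ℕ} :
    (extendGraph g n C).Adj u v ↔ g.Adj u v ∨ (u = n ∧ v ∈ C) ∨ (v = n ∧ u ∈ C) := by
  simp only [extendGraph, SimpleGraph.fromRel_adj]
  constructor
  · rintro ⟨-, h | h⟩
    · tauto
    · rcases h with h | h
      · exact Or.inl h.symm
      · tauto
  · rintro (h | ⟨rfl, hv⟩ | ⟨rfl, hu⟩)
    · exact ⟨h.ne, Or.inl (Or.inl h)⟩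
    · exact ⟨fun h => hnC (h ▸ hv), Or.inl (Or.inr ⟨rfl, hv⟩)⟩
    · exact ⟨fun h => hnC (h ▸ hu), Or.inr (Or.inr ⟨rfl, hu⟩)⟩

theorem completeBelow_succ (k : ℕ) :
    completeBelow (k + 1) = extendGraph (completeBelow k) k (Finset.range k) := by
  ext u v
  rw [extendGraph_adj (by simp), completeBelow_adj, completeBelow_adj]
  simp only [Finset.mem_range]
  omega

theorem completeBelow_isNClique_range (k : ℕ) :
    (completeBelow k).IsNClique k (Finset.range k) :=
  ⟨fun u hu v hv huv => completeBelow_adj.2 ⟨huv, by simpa using hu, by simpa using hv⟩,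
    Finset.card_range k⟩

section Support

variable {k n : ℕ} {g : SimpleGraph ℕ} {C : Finset ℕ}

theorem lt_of_adj_of_support_subset (hg : g.support ⊆ Set.Iio n) {u v : ℕ} (h : g.Adj u v) :
    u < n :=
  hg (g.mem_support.2 ⟨v, h⟩)

theorem lt_of_mem_isNClique (hk : 2 ≤ k) (hg : g.support ⊆ Set.Iio n)
    (hC : g.IsNClique k C) {u : ℕ} (hu : u ∈ C) : u < n := by
  obtain ⟨w, hw, hwu⟩ := Finset.exists_mem_ne (hC.card_eq ▸ hk) u
  exact lt_of_adj_of_support_subset hg (hC.1 hu hw (Ne.symm hwu))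

theorem notMem_of_isNClique (hk : 2 ≤ k) (hg : g.support ⊆ Set.Iio n)
    (hC : g.IsNClique k C) : n ∉ C :=
  fun h => (lt_of_mem_isNClique hk hg hC h).false

theorem setOf_isNClique_finite (hk : 2 ≤ k) (hg : g.support ⊆ Set.Iio n) :
    {C : Finset ℕ | g.IsNClique k C}.Finite :=
  (Finset.range n).powerset.finite_toSet.subset fun _ hC =>
    Finset.mem_powerset.2 fun _ hu => Finset.mem_range.2 (lt_of_mem_isNClique hk hg hC hu)

theorem support_extendGraph_subset (hg : g.support ⊆ Set.Iio n) (hC : ∀ u ∈ C, u < n) :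
    (extendGraph g n C).support ⊆ Set.Iio (n + 1) := by
  intro u hu
  obtain ⟨w, huw⟩ := (extendGraph g n C).mem_support.1 hu
  have hnC : n ∉ C := fun h => (hC n h).false
  rw [extendGraph_adj hnC] at huw
  rcases huw with h | ⟨rfl, -⟩ | ⟨-, hu⟩
  · exact Nat.lt_succ_of_lt (lt_of_adj_of_support_subset hg h)
  · exact Nat.lt_succ_self u
  · exact Nat.lt_succ_of_lt (hC u hu)

theorem neighborSet_extendGraph_self (hg : g.support ⊆ Set.Iio n) (hnC : n ∉ C) :
    (extendGraph g n C).neighborSet n = C := by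
  ext u
  rw [SimpleGraph.mem_neighborSet, extendGraph_adj hnC]
  constructor
  · rintro (h | ⟨-, h⟩ | ⟨rfl, h⟩)
    · exact absurd (lt_of_adj_of_support_subset hg h) (lt_irrefl n)
    · exact h
    · exact absurd h hnC
  · exact fun h => Or.inr (Or.inl ⟨rfl, h⟩)

theorem ncard_neighborSet_extendGraph (hg : g.support ⊆ Set.Iio n) (hnC : n ∉ C) {v : ℕ}
    (hv : v < n) :
    ((extendGraph g n C).neighborSet v).ncard
      = (g.neighborSet v).ncard + if v ∈ C then 1 else 0 := by
  have hnv : n ∉ g.neighborSet v := fun h => (lt_of_adj_of_support_subset hg h.symm).false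
  have hfin : (g.neighborSet v).Finite :=
    (Set.finite_Iio n).subset fun _ h => lt_of_adj_of_support_subset hg h.symm
  have hnb : (extendGraph g n C).neighborSet v
      = if v ∈ C then insert n (g.neighborSet v) else g.neighborSet v := by
    ext u
    rw [SimpleGraph.mem_neighborSet, extendGraph_adj hnC]
    split_ifs with hvC
    · simp only [Set.mem_insert_iff, SimpleGraph.mem_neighborSet]
      grind
    · simp only [SimpleGraph.mem_neighborSet]
      grind
  rw [hnb]
  split_ifs
  · exact Set.ncard_insert_of_notMem hnv hfin
  · rfl

theorem injOn_insert_erase (hnC : n ∉ C) : Set.InjOn (fun u => insert n (C.erase u)) C := by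
  intro u hu w hw h
  have hnu : ∀ x, n ∉ C.erase x := fun x h => hnC (Finset.mem_of_mem_erase h)
  have h' := congrArg (Finset.erase · n) h
  simp only [Finset.erase_insert (hnu _)] at h'
  exact C.erase_injOn hu hw h'

theorem isNClique_extendGraph_iff (hk : 2 ≤ k) (hg : g.support ⊆ Set.Iio n)
    (hC : g.IsNClique k C) {D : Finset ℕ} :
    (extendGraph g n C).IsNClique k D ↔
      g.IsNClique k D ∨ ∃ u ∈ C, insert n (C.erase u) = D := by
  have hnC := notMem_of_isNClique hk hg hC
  have hle : g ≤ extendGraph g n C := fun u v h => (extendGraph_adj hnC).2 (Or.inl h)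
  constructor
  · intro hD
    by_cases hnD : n ∈ D
    · right
      have hsub : D.erase n ⊆ C := fun u hu => by
        have hadj := hD.1 hnD (Finset.mem_of_mem_erase hu) (Finset.ne_of_mem_erase hu).symm
        rw [extendGraph_adj hnC] at hadj
        rcases hadj with h | ⟨-, h⟩ | ⟨h, -⟩
        · exact absurd (lt_of_adj_of_support_subset hg h) (lt_irrefl n)
        · exact h
        · exact absurd h (Finset.ne_of_mem_erase hu)
      have hcard : (D.erase n).card + 1 = C.card := by
        rw [Finset.card_erase_add_one hnD, hD.card_eq, hC.card_eq]
      obtain ⟨u, hu, heq⟩ := Finset.exists_eq_erase_of_subset_of_card_add_one hsub hcard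
      exact ⟨u, hu, heq ▸ Finset.insert_erase hnD⟩
    · left
      refine ⟨fun u hu v hv huv => ?_, hD.card_eq⟩
      have hadj := hD.1 hu hv huv
      rw [extendGraph_adj hnC] at hadj
      rcases hadj with h | ⟨rfl, -⟩ | ⟨rfl, -⟩
      · exact h
      · exact absurd hu hnD
      · exact absurd hv hnD
  · rintro (hD | ⟨u, hu, rfl⟩)
    · exact hD.mono hle
    · refine (hC.mono hle).insert_erase (fun w hw => ?_) hu
      exact (extendGraph_adj hnC).2 (Or.inr (Or.inl ⟨rfl, (Finset.mem_sdiff.1 hw).1⟩))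

theorem ncard_isNClique_extendGraph (hk : 2 ≤ k) (hg : g.support ⊆ Set.Iio n)
    (hC : g.IsNClique k C) (P : Finset ℕ → Prop) [DecidablePred P] :
    {D | (extendGraph g n C).IsNClique k D ∧ P D}.ncard
      = {D | g.IsNClique k D ∧ P D}.ncard + {u ∈ C | P (insert n (C.erase u))}.card := by
  have hnC := notMem_of_isNClique hk hg hC
  have hset : {D | (extendGraph g n C).IsNClique k D ∧ P D}
      = {D | g.IsNClique k D ∧ P D}
        ∪ ↑({u ∈ C | P (insert n (C.erase u))}.image fun u => insert n (C.erase u)) := by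
    ext D
    simp only [Set.mem_ofPred_eq, Set.mem_union, Finset.coe_image, Finset.coe_filter,
      Set.mem_image, isNClique_extendGraph_iff hk hg hC]
    grind
  have hdisj : Disjoint {D | g.IsNClique k D ∧ P D}
      ↑({u ∈ C | P (insert n (C.erase u))}.image fun u => insert n (C.erase u)) := by
    refine Set.disjoint_left.2 fun D hD hD' => ?_
    obtain ⟨u, -, rfl⟩ := Finset.mem_image.1 hD'
    exact notMem_of_isNClique hk hg hD.1 (Finset.mem_insert_self n _)
  have hfin : {D | g.IsNClique k D ∧ P D}.Finite :=
    (setOf_isNClique_finite hk hg).subset fun _ hD => hD.1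
  rw [hset, Set.ncard_union_eq hdisj hfin (Finset.finite_toSet _), Set.ncard_coe_finset,
    Finset.card_image_of_injOn
      ((injOn_insert_erase hnC).mono (Finset.coe_subset.2 (Finset.filter_subset _ _)))]

theorem support_completeBelow_subset : (completeBelow n).support ⊆ Set.Iio n := fun u hu => by
  obtain ⟨w, h⟩ := (completeBelow n).mem_support.1 hu
  exact (completeBelow_adj.1 h).2.1

theorem setOf_isNClique_completeBelow (hk : 2 ≤ k) :
    {C : Finset ℕ | (completeBelow k).IsNClique k C} = {Finset.range k} := by
  ext C
  simp only [Set.mem_ofPred_eq, Set.mem_singleton_iff]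
  constructor
  · intro hC
    refine Finset.eq_of_subset_of_card_le (fun u hu => ?_) (by rw [hC.card_eq, Finset.card_range])
    exact Finset.mem_range.2 (lt_of_mem_isNClique hk support_completeBelow_subset hC hu)
  · rintro rfl
    exact completeBelow_isNClique_range k

end Support

theorem ncard_neighborSet_completeBelow {m v : ℕ} (hv : v < m) :
    ((completeBelow m).neighborSet v).ncard = m - 1 := by
  have h : (completeBelow m).neighborSet v = ↑((Finset.range m).erase v) := by
    ext u
    simp only [SimpleGraph.mem_neighborSet, completeBelow_adj, Finset.coe_erase,
      Finset.coe_range, Set.mem_sdiff, Set.mem_Iio, Set.mem_singleton_iff]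
    omega
  rw [h, Set.ncard_coe_finset, Finset.card_erase_of_mem (Finset.mem_range.2 hv),
    Finset.card_range]

/-- A `k`-tree on the vertices `0, …, n - 1`, attached in increasing order. Unlike
`IsKTreeRealization`, it starts one step earlier, from the `k`-clique on `0, …, k - 1`. -/
inductive IsKTree (k : ℕ) : ℕ → SimpleGraph ℕ → Prop
  | complete : IsKTree k k (completeBelow k)
  | extend {n : ℕ} {g : SimpleGraph ℕ} {C : Finset ℕ} :
      IsKTree k n g → g.IsNClique k C → IsKTree k (n + 1) (extendGraph g n C)

theorem isKTree_completeBelow_succ (k : ℕ) : IsKTree k (k + 1) (completeBelow (k + 1)) :=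
  completeBelow_succ k ▸ IsKTree.complete.extend (completeBelow_isNClique_range k)

namespace IsKTree

variable {k n : ℕ} {g : SimpleGraph ℕ}

theorem k_le (h : IsKTree k n g) : k ≤ n := by
  induction h with
  | complete => exact le_rfl
  | extend _ _ ih => exact ih.trans (Nat.le_succ _)

theorem support_subset (hk : 2 ≤ k) (h : IsKTree k n g) : g.support ⊆ Set.Iio n := by
  induction h with
  | complete => exact support_completeBelow_subset
  | extend _ hC ih =>
    exact support_extendGraph_subset ih fun u hu => lt_of_mem_isNClique hk ih hC hu

theorem ncard_cliques (hk : 2 ≤ k) (h : IsKTree k n g) :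
    ({C | g.IsNClique k C}.ncard : ℤ) = k * n - k ^ 2 + 1 := by
  induction h with
  | complete =>
    rw [setOf_isNClique_completeBelow hk, Set.ncard_singleton]
    ring
  | @extend n g C h hC ih =>
    have hcount := ncard_isNClique_extendGraph hk (h.support_subset hk) hC (fun _ => True)
    simp only [and_true, Finset.filter_true] at hcount
    rw [hcount, Nat.cast_add, ih, hC.card_eq]
    push_cast
    ring

theorem ncard_cliques_mem (hk : 2 ≤ k) (h : IsKTree k n g) {v : ℕ} (hv : v < n) :
    ({C | g.IsNClique k C ∧ v ∈ C}.ncard : ℤ)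
      = (k - 1) * (g.neighborSet v).ncard - k * (k - 2) := by
  induction h generalizing v with
  | complete =>
    have hset : {C | (completeBelow k).IsNClique k C ∧ v ∈ C} = {Finset.range k} := by
      rw [← Set.sep_ofPred, setOf_isNClique_completeBelow hk]
      exact Set.sep_eq_self_iff_mem_true.2 fun _ hC => hC ▸ Finset.mem_range.2 hv
    rw [hset, Set.ncard_singleton, ncard_neighborSet_completeBelow hv,
      Nat.cast_sub (by omega : 1 ≤ k)]
    push_cast
    ring
  | @extend n g C h hC ih =>
    have hs := h.support_subset hk
    have hnC := notMem_of_isNClique hk hs hC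
    rw [ncard_isNClique_extendGraph hk hs hC (v ∈ ·)]
    rcases Nat.lt_succ_iff_lt_or_eq.1 hv with hv | rfl
    · rw [Finset.card_filter_mem_insert_erase hv.ne, ncard_neighborSet_extendGraph hs hnC hv]
      have ih := ih hv
      split_ifs
      · rw [hC.card_eq]
        push_cast [Nat.cast_sub (by omega : 1 ≤ k)]
        linarith
      · push_cast
        linarith
    · have hnone : {D | g.IsNClique k D ∧ v ∈ D} = ∅ :=
        Set.eq_empty_of_forall_notMem fun D hD => notMem_of_isNClique hk hs hD.1 hD.2
      rw [hnone, Finset.filter_true_of_mem fun u _ => Finset.mem_insert_self v _,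
        neighborSet_extendGraph_self hs hnC, Set.ncard_empty, Set.ncard_coe_finset, hC.card_eq]
      push_cast
      ring

theorem ncard_cliques_pos (hk : 2 ≤ k) (h : IsKTree k n g) :
    0 < {C | g.IsNClique k C}.ncard := by
  have := h.ncard_cliques hk
  have hkn : (k : ℤ) ^ 2 ≤ k * n := by
    rw [sq]
    exact mul_le_mul_of_nonneg_left (by exact_mod_cast h.k_le) (by positivity)
  omega

theorem ncard_cliques_mem_div (hk : 2 ≤ k) (h : IsKTree k n g) {v : ℕ} (hv : v < n) :
    ({C | g.IsNClique k C ∧ v ∈ C}.ncard : ℝ) / ({C | g.IsNClique k C}.ncard : ℝ)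
      = (((k : ℝ) - 1) * (g.neighborSet v).ncard - k * (k - 2))
          / ((k : ℝ) * n - (k : ℝ) ^ 2 + 1) := by
  have hmem := h.ncard_cliques_mem hk hv
  have htot := h.ncard_cliques hk
  rw [← Int.cast_natCast, hmem, ← Int.cast_natCast (R := ℝ), htot]
  push_cast
  rfl

end IsKTree

theorem IsKTreeRealization.isKTree {k : ℕ} {G : ℕ → SimpleGraph ℕ} (hG : IsKTreeRealization k G)
    {n : ℕ} (hn : k + 1 ≤ n) : IsKTree k n (G n) := by
  induction n, hn using Nat.le_induction with
  | base =>
    have h : G (k + 1) = completeBelow (k + 1) := by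
      ext u v
      rw [hG.1, completeBelow_adj]
    exact h ▸ isKTree_completeBelow_succ k
  | succ n hn ih =>
    obtain ⟨C, hC, hCn, hadj⟩ := hG.2 n hn
    have h : G (n + 1) = extendGraph (G n) n C := by
      ext u v
      rw [hadj, extendGraph_adj fun h => (hCn n h).false]
    exact h ▸ ih.extend hC

theorem finite_setOf_support_subset (n : ℕ) :
    {g : SimpleGraph ℕ | g.support ⊆ Set.Iio n}.Finite := by
  have hE : (Set.image2 Sym2.mk (Set.Iio n) (Set.Iio n)).Finite :=
    (Set.finite_Iio n).image2 _ (Set.finite_Iio n)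
  have himage : (fun g : SimpleGraph ℕ => g.edgeSet) '' {g | g.support ⊆ Set.Iio n}
      ⊆ 𝒫 Set.image2 Sym2.mk (Set.Iio n) (Set.Iio n) := by
    rintro _ ⟨g, hg, rfl⟩ e he
    induction e using Sym2.ind with
    | h u v =>
      exact ⟨u, lt_of_adj_of_support_subset hg he, v,
        lt_of_adj_of_support_subset hg (g.adj_symm he), rfl⟩
  exact (hE.powerset.subset himage).of_finite_image
    fun _ _ _ _ h => SimpleGraph.edgeSet_injective h

namespace IsRandomKTreeProcess

variable {k n : ℕ} {Ω : Type*} [MeasurableSpace Ω] {μ : Measure Ω}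
  {G : ℕ → Ω → SimpleGraph ℕ} {g : SimpleGraph ℕ}

theorem measure_biUnion_extendGraph (hk : 2 ≤ k) (P : IsRandomKTreeProcess k μ G)
    (hn : k + 1 ≤ n) (hg : IsKTree k n g) {S : Finset (Finset ℕ)}
    (hS : ∀ C ∈ S, g.IsNClique k C) :
    μ (⋃ C ∈ S, {ω | G n ω = g ∧ G (n + 1) ω = extendGraph g n C})
      = S.card * (μ {ω | G n ω = g} / ({D | g.IsNClique k D}.ncard : ENNReal)) := by
  have hs := hg.support_subset hk
  have hdisj : (S : Set (Finset ℕ)).PairwiseDisjoint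
      fun C => {ω | G n ω = g ∧ G (n + 1) ω = extendGraph g n C} := by
    intro C hC C' hC' hne
    refine Set.disjoint_left.2 fun ω ⟨_, hω⟩ ⟨_, hω'⟩ => hne ?_
    have h := congrArg (SimpleGraph.neighborSet · n) (hω.symm.trans hω')
    simp only [neighborSet_extendGraph_self hs (notMem_of_isNClique hk hs (hS C hC)),
      neighborSet_extendGraph_self hs (notMem_of_isNClique hk hs (hS C' hC'))] at h
    exact Finset.coe_injective h
  rw [measure_biUnion_finset hdisj fun C _ => (P.meas n g).inter (P.meas (n + 1) _),
    Finset.sum_congr rfl fun C hC => P.step n hn g C (hS C hC), Finset.sum_const, nsmul_eq_mul]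

theorem ae_exists_extendGraph (hk : 2 ≤ k) (P : IsRandomKTreeProcess k μ G)
    [IsFiniteMeasure μ] (hn : k + 1 ≤ n) (hg : IsKTree k n g) :
    ∀ᵐ ω ∂μ, G n ω = g → ∃ C, g.IsNClique k C ∧ G (n + 1) ω = extendGraph g n C := by
  have hfin := setOf_isNClique_finite hk (hg.support_subset hk)
  set U := ⋃ C ∈ hfin.toFinset, {ω | G n ω = g ∧ G (n + 1) ω = extendGraph g n C}
  have hU : μ U = μ {ω | G n ω = g} := by
    rw [P.measure_biUnion_extendGraph hk hn hg fun C hC => hfin.mem_toFinset.1 hC,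
      ← Set.ncard_eq_toFinset_card _ hfin, ENNReal.mul_div_cancel
        (Nat.cast_ne_zero.2 (hg.ncard_cliques_pos hk).ne') (ENNReal.natCast_ne_top _)]
  have hUsub : U ⊆ {ω | G n ω = g} := by
    simp only [U, Set.iUnion_subset_iff]
    exact fun C _ ω hω => hω.1
  have hUmeas : MeasurableSet U :=
    Finset.measurableSet_biUnion _ fun C _ => (P.meas n g).inter (P.meas (n + 1) _)
  refine ae_iff.2 (measure_mono_null (t := {ω | G n ω = g} \ U) ?_ ?_)
  · intro ω hω
    simp only [Set.mem_ofPred_eq, Classical.not_imp, not_exists, not_and] at hω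
    refine ⟨hω.1, fun hωU => ?_⟩
    simp only [U, Set.mem_iUnion, Set.Finite.mem_toFinset] at hωU
    obtain ⟨C, hC, -, hext⟩ := hωU
    exact hω.2 C hC hext
  · rw [measure_sdiff hUsub hUmeas.nullMeasurableSet (measure_ne_top μ U), hU, tsub_self]

theorem ae_isKTree (hk : 2 ≤ k) (P : IsRandomKTreeProcess k μ G) [IsProbabilityMeasure μ]
    (hn : k + 1 ≤ n) : ∀ᵐ ω ∂μ, IsKTree k n (G n ω) := by
  induction n, hn using Nat.le_induction with
  | base =>
    have hinit : ∀ᵐ ω ∂μ, G (k + 1) ω = completeBelow (k + 1) :=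
      (ae_iff_measure_eq (P.meas _ _).nullMeasurableSet).2 (by rw [P.init, measure_univ])
    filter_upwards [hinit] with ω hω
    exact hω ▸ isKTree_completeBelow_succ k
  | succ n hn ih =>
    have hcount : {g | IsKTree k n g}.Countable :=
      ((finite_setOf_support_subset n).subset fun _ hg => hg.support_subset hk).countable
    have hext := (ae_ball_iff hcount).2 fun g hg => P.ae_exists_extendGraph hk hn hg
    filter_upwards [ih, hext] with ω hω hωext
    obtain ⟨C, hC, heq⟩ := hωext (G n ω) hω rfl
    exact heq ▸ hω.extend hC

theorem isKTree_of_measure_ne_zero (hk : 2 ≤ k) (P : IsRandomKTreeProcess k μ G)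
    [IsProbabilityMeasure μ] (hn : k + 1 ≤ n) (h0 : μ {ω | G n ω = g} ≠ 0) : IsKTree k n g := by
  by_contra hg
  refine h0 (measure_mono_null (fun ω (hω : G n ω = g) => ?_) (ae_iff.1 (P.ae_isKTree hk hn)))
  exact (hω ▸ hg : ¬IsKTree k n (G n ω))

theorem measure_adj (hk : 2 ≤ k) (P : IsRandomKTreeProcess k μ G) [IsFiniteMeasure μ]
    (hn : k + 1 ≤ n) (hg : IsKTree k n g) {v : ℕ} :
    μ {ω | G n ω = g ∧ (G (n + 1) ω).Adj n v}
      = {C | g.IsNClique k C ∧ v ∈ C}.ncard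
          * (μ {ω | G n ω = g} / ({C | g.IsNClique k C}.ncard : ENNReal)) := by
  have hs := hg.support_subset hk
  have hfin : {C | g.IsNClique k C ∧ v ∈ C}.Finite :=
    (setOf_isNClique_finite hk hs).subset fun _ hC => hC.1
  rw [Set.ncard_eq_toFinset_card _ hfin,
    ← P.measure_biUnion_extendGraph hk hn hg fun C hC => (hfin.mem_toFinset.1 hC).1]
  refine measure_congr (Filter.eventuallyEq_set.2 ?_)
  filter_upwards [P.ae_exists_extendGraph hk hn hg] with ω hω
  simp only [Set.mem_ofPred_eq, Set.mem_iUnion, Set.Finite.mem_toFinset, exists_prop]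
  constructor
  · rintro ⟨hgω, hadj⟩
    obtain ⟨C, hC, hext⟩ := hω hgω
    rw [hext, ← SimpleGraph.mem_neighborSet,
      neighborSet_extendGraph_self hs (notMem_of_isNClique hk hs hC)] at hadj
    exact ⟨C, ⟨hC, hadj⟩, hgω, hext⟩
  · rintro ⟨C, ⟨hC, hvC⟩, hgω, hext⟩
    refine ⟨hgω, ?_⟩
    rw [hext, ← SimpleGraph.mem_neighborSet,
      neighborSet_extendGraph_self hs (notMem_of_isNClique hk hs hC)]
    exact hvC

end IsRandomKTreeProcess

/-- For every integer `k ≥ 2`, every `k`-tree process realization, every `n ≥ k+1` and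
every vertex `v` of `G n` with `deg_{G n}(v) = d`, the proportion of `k`-cliques of `G n`
containing `v` equals `((k−1)d − k(k−2)) / (kn − k² + 1)`.  Consequently, in the random
`k`-tree process, conditionally on `G^k(n)`, the probability that the new vertex `v_{n+1}`
is joined to a given vertex `v` of degree `d` is `((k−1)d − k(k−2)) / (kn − k² + 1)`. -/
theorem kclique_proportion_and_attachment_probability (k : ℕ) (hk : 2 ≤ k) :
    (∀ G : ℕ → SimpleGraph ℕ, IsKTreeRealization k G →
      ∀ n, k + 1 ≤ n → ∀ v, v < n → ∀ d : ℕ, ((G n).neighborSet v).ncard = d →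
        ({C : Finset ℕ | (G n).IsNClique k C ∧ v ∈ C}.ncard : ℝ)
            / ({C : Finset ℕ | (G n).IsNClique k C}.ncard : ℝ)
          = (((k : ℝ) - 1) * d - k * (k - 2)) / ((k : ℝ) * n - (k : ℝ) ^ 2 + 1)) ∧
    (∀ (Ω : Type) (_ : MeasurableSpace Ω) (μ : Measure Ω), IsProbabilityMeasure μ →
      ∀ G : ℕ → Ω → SimpleGraph ℕ, IsRandomKTreeProcess k μ G →
      ∀ n, k + 1 ≤ n → ∀ g : SimpleGraph ℕ, ∀ v, v < n → ∀ d : ℕ,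
        (g.neighborSet v).ncard = d →
        μ {ω | G n ω = g ∧ (G (n + 1) ω).Adj n v}
          = ENNReal.ofReal
              ((((k : ℝ) - 1) * d - k * (k - 2)) / ((k : ℝ) * n - (k : ℝ) ^ 2 + 1))
            * μ {ω | G n ω = g}) := by
  refine ⟨fun G hG n hn v hv d hd => ?_, fun Ω _ μ _ G P n hn g v hv d hd => ?_⟩
  · exact hd ▸ (hG.isKTree hn).ncard_cliques_mem_div hk hv
  · by_cases h0 : μ {ω | G n ω = g} = 0
    · rw [h0, mul_zero]
      exact measure_mono_null (fun ω hω => hω.1) h0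
    have hg := P.isKTree_of_measure_ne_zero hk hn h0
    rw [P.measure_adj hk hn hg, ← hd, ← hg.ncard_cliques_mem_div hk hv,
      ENNReal.ofReal_div_of_pos (Nat.cast_pos.2 (hg.ncard_cliques_pos hk)),
      ENNReal.ofReal_natCast, ENNReal.ofReal_natCast, div_eq_mul_inv, div_eq_mul_inv]
    ring
end

section
/- Fix an integer k ≥ 2 and let (y(n))_{n ≥ k+2} be the real sequence defined by y(k+2) = 2 and y(n+1) = 1 + (1 − k/(k·n − k² + 1))·y(n) for n ≥ k+2. Then the quantity |y(n) − n/2| is bounded uniformly in n; that is, there is a constant C (depending only on k) with |y(n) − n/2| ≤ C for all n ≥ k+2. -/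
/-! With `e n = y n - n/2` and `a n = k/(k n - k² + 1) ∈ [0, 1]`, the recurrence becomes
`e (n+1) = (1 - a n) e n - a n M` with the constant `M = (k² - 1)/(2k)`: each step is a convex
combination of `e n` and `-M`, so `|e n|` never exceeds `max |e (k+2)| M`. -/

theorem abs_le_max_of_convex_step {e a : ℕ → ℝ} {M : ℝ} {n₀ : ℕ}
    (ha : ∀ n, n₀ ≤ n → 0 ≤ a n ∧ a n ≤ 1)
    (he : ∀ n, n₀ ≤ n → |e (n + 1) - (1 - a n) * e n| ≤ a n * M) :
    ∀ n, n₀ ≤ n → |e n| ≤ max |e n₀| M := by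
  intro n hn
  induction n, hn using Nat.le_induction with
  | base => exact le_max_left _ _
  | succ n hn ih =>
    obtain ⟨ha0, ha1⟩ := ha n hn
    have htriangle := abs_sub_abs_le_abs_sub (e (n + 1)) ((1 - a n) * e n)
    calc |e (n + 1)|
        ≤ |(1 - a n) * e n| + |e (n + 1) - (1 - a n) * e n| := by linarith
      _ ≤ (1 - a n) * max |e n₀| M + a n * max |e n₀| M := by
        rw [abs_mul, abs_of_nonneg (sub_nonneg.mpr ha1)]
        have hstep := (he n hn).trans (mul_le_mul_of_nonneg_left (le_max_right |e n₀| M) ha0)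
        have hprev := mul_le_mul_of_nonneg_left ih (sub_nonneg.mpr ha1)
        linarith
      _ = max |e n₀| M := by ring

theorem recurrence_sub_half_residual (k n y : ℝ) (hk : k ≠ 0) (hD : k * n - k ^ 2 + 1 ≠ 0) :
    1 + (1 - k / (k * n - k ^ 2 + 1)) * y - (n + 1) / 2
        - (1 - k / (k * n - k ^ 2 + 1)) * (y - n / 2)
      = -(k / (k * n - k ^ 2 + 1) * ((k ^ 2 - 1) / (2 * k))) := by
  generalize hD' : k * n - k ^ 2 + 1 = D at hD ⊢
  field_simp
  linear_combination -hD'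

theorem step_weight_mem_unitInterval {k n : ℝ} (hk : 0 ≤ k) (hn : k + 2 ≤ n) :
    0 ≤ k / (k * n - k ^ 2 + 1) ∧ k / (k * n - k ^ 2 + 1) ≤ 1 := by
  have hD : k ≤ k * n - k ^ 2 + 1 := by nlinarith
  exact ⟨div_nonneg hk (hk.trans hD), div_le_one_of_le₀ hD (by linarith)⟩

theorem base_recurrence_linear_growth_general (k : ℕ) (hk : 2 ≤ k) (y : ℕ → ℝ)
    (hy : ∀ n : ℕ, k + 2 ≤ n →
      y (n + 1) = 1 + (1 - (k : ℝ) / ((k : ℝ) * n - (k : ℝ) ^ 2 + 1)) * y n) :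
    ∃ C : ℝ, ∀ n : ℕ, k + 2 ≤ n → |y n - (n : ℝ) / 2| ≤ C := by
  have hk1 : (1 : ℝ) ≤ k := by exact_mod_cast one_le_two.trans hk
  have hweight (n : ℕ) (hn : k + 2 ≤ n) := step_weight_mem_unitInterval (n := n) k.cast_nonneg
    (by exact_mod_cast hn)
  refine ⟨_, abs_le_max_of_convex_step (e := fun n => y n - (n : ℝ) / 2)
    (M := ((k : ℝ) ^ 2 - 1) / (2 * k)) hweight ?_⟩
  intro n hn
  obtain ⟨ha0, -⟩ := hweight n hn
  have hM : 0 ≤ ((k : ℝ) ^ 2 - 1) / (2 * k) := div_nonneg (by nlinarith) (by linarith)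
  have hD : (k : ℝ) * n - (k : ℝ) ^ 2 + 1 ≠ 0 := by
    have : (k : ℝ) + 2 ≤ n := by exact_mod_cast hn
    nlinarith
  rw [hy n hn, Nat.cast_succ, recurrence_sub_half_residual _ _ _ (by linarith) hD, abs_neg,
    abs_of_nonneg (mul_nonneg ha0 hM)]

/-- Fix an integer `k ≥ 2` and let `(y n)_{n ≥ k+2}` be the real sequence defined by
`y (k+2) = 2` and `y (n+1) = 1 + (1 − k/(k·n − k² + 1))·y n` for `n ≥ k+2`. Then
`|y n − n/2|` is bounded uniformly in `n`: there is a constant `C` with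
`|y n − n/2| ≤ C` for all `n ≥ k+2`. -/
theorem base_recurrence_linear_growth (k : ℕ) (hk : 2 ≤ k) (y : ℕ → ℝ)
    (hy0 : y (k + 2) = 2)
    (hy : ∀ n : ℕ, k + 2 ≤ n →
      y (n + 1) = 1 + (1 - (k : ℝ) / ((k : ℝ) * n - (k : ℝ) ^ 2 + 1)) * y n) :
    ∃ C : ℝ, ∀ n : ℕ, k + 2 ≤ n → |y n - (n : ℝ) / 2| ≤ C :=
  base_recurrence_linear_growth_general k hk y hy
end

section
/- Fix an integer k ≥ 2, let a = k − 1, b = k·(k − 2), and for n > k let c = k − (k² − 1)/n, so that p(d, n) = (a·d − b)/(c·n) for d ≥ k. Let (β_d)_{d ≥ k} satisfy β_k = 1/2 and β_d = (a(d−1) − b)/(a·d − b + k) · β_{d−1} for d > k. Then for every d > k and every n > k, p(d−1, n)·β_{d−1}·n + (1 − p(d, n))·β_d·n − (n+1)·β_d = (k² − 1)/(c·n) · β_d. -/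
/-- Fix an integer `k ≥ 2`, let `a = k − 1`, `b = k·(k − 2)`, and for `n > k` let
`c = k − (k² − 1)/n`, so that `p(d, n) = (a·d − b)/(c·n)` for `d ≥ k`. Let `(β_d)_{d ≥ k}`
satisfy `β_k = 1/2` and `β_d = (a(d−1) − b)/(a·d − b + k) · β_{d−1}` for `d > k`. Then
for every `d > k` and every `n > k`,
`p(d−1, n)·β_{d−1}·n + (1 − p(d, n))·β_d·n − (n+1)·β_d = (k² − 1)/(c·n) · β_d`. -/
theorem beta_error_identity (k : ℕ) (hk : 2 ≤ k) (β : ℕ → ℝ) (hβk : β k = 1 / 2)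
    (hβ : ∀ d : ℕ, k < d →
      β d = (((k : ℝ) - 1) * ((d : ℝ) - 1) - (k : ℝ) * ((k : ℝ) - 2))
              / (((k : ℝ) - 1) * (d : ℝ) - (k : ℝ) * ((k : ℝ) - 2) + (k : ℝ))
            * β (d - 1))
    (d n : ℕ) (hd : k < d) (hn : k < n) :
    ((((k : ℝ) - 1) * ((d : ℝ) - 1) - (k : ℝ) * ((k : ℝ) - 2))
        / (((k : ℝ) - ((k : ℝ) ^ 2 - 1) / (n : ℝ)) * (n : ℝ))) * β (d - 1) * (n : ℝ)
      + (1 - (((k : ℝ) - 1) * (d : ℝ) - (k : ℝ) * ((k : ℝ) - 2))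
          / (((k : ℝ) - ((k : ℝ) ^ 2 - 1) / (n : ℝ)) * (n : ℝ))) * β d * (n : ℝ)
      - ((n : ℝ) + 1) * β d
    = (((k : ℝ) ^ 2 - 1) / ((((k : ℝ) - ((k : ℝ) ^ 2 - 1) / (n : ℝ))) * (n : ℝ))) * β d := by
  have hkr : (2:ℝ) ≤ (k:ℝ) := by exact_mod_cast hk
  have hdr : (k:ℝ) < (d:ℝ) := by exact_mod_cast hd
  have hnr : (k:ℝ) < (n:ℝ) := by exact_mod_cast hn
  have hn0 : (n:ℝ) ≠ 0 := by nlinarith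
  -- c*n rewritten: (k - (k²-1)/n) * n = k*n - (k²-1)
  have hcn : ((k:ℝ) - ((k:ℝ)^2 - 1)/(n:ℝ)) * (n:ℝ) = (k:ℝ)*(n:ℝ) - ((k:ℝ)^2 - 1) := by
    field_simp
  have hcn0 : (k:ℝ)*(n:ℝ) - ((k:ℝ)^2 - 1) ≠ 0 := by nlinarith
  have hD0 : ((k:ℝ) - 1) * (d:ℝ) - (k:ℝ) * ((k:ℝ) - 2) + (k:ℝ) ≠ 0 := by nlinarith
  rw [hβ d hd, hcn]
  field_simp
  ring
end
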